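/- arXiv:2007.09534 — 7 statements merged into one kernel-verified Lean document; each statement's English description precedes it below -/
import Mathlib

section
/- Let ξ be a random variable with E|ξ|^p < ∞ for some p > 1 and E ξ = 0. Then Σₙ n^{-1/p} |E[ξ·1_{|ξ| ≤ n^{1/p}}]| < ∞. -/
open MeasureTheory
lemma step_ineq {r : ℝ} (hr0 : 0 < r) (hr1 : r < 1) {x : ℝ} (hx : 1 ≤ x) :
    x ^ (-r) ≤ (1 / (1 - r)) * (x ^ (1 - r) - (x - 1) ^ (1 - r)) := by
  have hq0 : (0 : ℝ) < 1 - r := by linarith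
  have hx0 : 0 < x := lt_of_lt_of_le one_pos hx
  have hs : -1 ≤ -(1 / x) := by
    have : 1 / x ≤ 1 := by rw [div_le_one hx0]; exact hx
    linarith
  have hbern := rpow_one_add_le_one_add_mul_self hs hq0.le (by linarith : (1:ℝ) - r ≤ 1)
  have hxq : 0 < x ^ (1 - r) := Real.rpow_pos_of_pos hx0 _
  have hxr : x ^ (1 - r) = x ^ (-r) * x := by
    rw [show (1 : ℝ) - r = -r + 1 by ring, Real.rpow_add hx0, Real.rpow_one]
  have h4 : (x - 1) ^ (1 - r) ≤ x ^ (1 - r) - (1 - r) * x ^ (-r) := by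
    calc (x - 1) ^ (1 - r) = ((x - 1) / x) ^ (1 - r) * x ^ (1 - r) := by
          rw [Real.div_rpow (by linarith) hx0.le, div_mul_cancel₀ _ hxq.ne']
      _ ≤ (1 + (1 - r) * -(1 / x)) * x ^ (1 - r) := by
          apply mul_le_mul_of_nonneg_right _ hxq.le
          have h1 : (1 : ℝ) + -(1 / x) = (x - 1) / x := by field_simp; ring
          rw [← h1]; exact hbern
      _ = x ^ (1 - r) - (1 - r) * (x ^ (1 - r) / x) := by ring
      _ = x ^ (1 - r) - (1 - r) * x ^ (-r) := by
          rw [hxr, mul_div_cancel_right₀ _ hx0.ne']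
  have h5 : (1 - r) * x ^ (-r) ≤ x ^ (1 - r) - (x - 1) ^ (1 - r) := by linarith
  calc x ^ (-r) = (1 / (1 - r)) * ((1 - r) * x ^ (-r)) := by field_simp
    _ ≤ (1 / (1 - r)) * (x ^ (1 - r) - (x - 1) ^ (1 - r)) := by
        apply mul_le_mul_of_nonneg_left h5 (by positivity)

lemma sum_rpow_neg_le {r : ℝ} (hr0 : 0 < r) (hr1 : r < 1) (M : ℕ) :
    ∑ n ∈ Finset.range M, (n : ℝ) ^ (-r) ≤ (1 / (1 - r)) * (M : ℝ) ^ (1 - r) := by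
  have key : ∀ K : ℕ, ∑ n ∈ Finset.range (K + 1), (n : ℝ) ^ (-r)
      ≤ (1 / (1 - r)) * (K : ℝ) ^ (1 - r) := by
    intro K
    induction K with
    | zero =>
        simp [Real.zero_rpow (by linarith : -r ≠ 0),
          Real.zero_rpow (by linarith : 1 - r ≠ 0)]
    | succ K ih =>
        rw [Finset.sum_range_succ]
        have h1 : (1 : ℝ) ≤ (K : ℝ) + 1 := le_add_of_nonneg_left (Nat.cast_nonneg K)
        have hstep := step_ineq hr0 hr1 h1
        rw [show (K : ℝ) + 1 - 1 = (K : ℝ) by ring] at hstep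
        have h2 : (1 / (1 - r)) * (((K : ℝ) + 1) ^ (1 - r) - (K : ℝ) ^ (1 - r))
            = (1 / (1 - r)) * ((K : ℝ) + 1) ^ (1 - r)
              - (1 / (1 - r)) * (K : ℝ) ^ (1 - r) := mul_sub _ _ _
        push_cast
        linarith
  calc ∑ n ∈ Finset.range M, (n : ℝ) ^ (-r)
      ≤ ∑ n ∈ Finset.range (M + 1), (n : ℝ) ^ (-r) := by
        apply Finset.sum_le_sum_of_subset_of_nonneg
          (Finset.range_subset_range.mpr (Nat.le_succ M))
        intro i _ _
        exact Real.rpow_nonneg (Nat.cast_nonneg i) _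
    _ ≤ (1 / (1 - r)) * (M : ℝ) ^ (1 - r) := key M

theorem stmt_4 {Ω : Type*} [MeasurableSpace Ω] (μ : Measure Ω) [IsProbabilityMeasure μ]
    (ξ : Ω → ℝ) (hξ : Measurable ξ) (p : ℝ) (hp : 1 < p)
    (hmom : Integrable (fun ω => |ξ ω| ^ p) μ)
    (hint : Integrable ξ μ) (hmean : ∫ ω, ξ ω ∂μ = 0) :
    Summable (fun n : ℕ =>
      (n : ℝ) ^ (-(1 / p)) * |∫ ω in {ω : Ω | abs (ξ ω) ≤ (n : ℝ) ^ (1 / p)}, ξ ω ∂μ|) := by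
  have hp0 : (0 : ℝ) < p := lt_trans one_pos hp
  set r : ℝ := 1 / p with hrdef
  have hr0 : 0 < r := by positivity
  have hr1 : r < 1 := by rw [hrdef, div_lt_one hp0]; exact hp
  set A : ℕ → Set Ω := fun n => {ω : Ω | |ξ ω| ≤ (n : ℝ) ^ r} with hAdef
  have hA : ∀ n, MeasurableSet (A n) := fun n => measurableSet_le hξ.abs measurable_const
  set h : ℕ → Ω → ℝ := fun n => ((A n)ᶜ).indicator (fun ω => (n : ℝ) ^ (-r) * |ξ ω|)
    with hhdef
  have hInt : ∀ n, Integrable (h n) μ :=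
    fun n => (hint.abs.const_mul _).indicator (hA n).compl
  have key1 : ∀ n : ℕ, (n : ℝ) ^ (-r) * |∫ ω in A n, ξ ω ∂μ| ≤ ∫ ω, h n ω ∂μ := by
    intro n
    have hc : ∫ ω in A n, ξ ω ∂μ + ∫ ω in (A n)ᶜ, ξ ω ∂μ = 0 := by
      rw [integral_add_compl (hA n) hint, hmean]
    have habs : |∫ ω in A n, ξ ω ∂μ| = |∫ ω in (A n)ᶜ, ξ ω ∂μ| := by
      rw [show ∫ ω in A n, ξ ω ∂μ = -∫ ω in (A n)ᶜ, ξ ω ∂μ by linarith, abs_neg]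
    rw [habs]
    have h1 : |∫ ω in (A n)ᶜ, ξ ω ∂μ| ≤ ∫ ω in (A n)ᶜ, |ξ ω| ∂μ := by
      simpa [Real.norm_eq_abs] using
        norm_integral_le_integral_norm (μ := μ.restrict (A n)ᶜ) ξ
    have h2 : ∫ ω, h n ω ∂μ = (n : ℝ) ^ (-r) * ∫ ω in (A n)ᶜ, |ξ ω| ∂μ := by
      simp only [hhdef]
      rw [integral_indicator (hA n).compl, integral_const_mul]
    rw [h2]
    exact mul_le_mul_of_nonneg_left h1 (Real.rpow_nonneg (Nat.cast_nonneg n) _)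
  have key2 : ∀ (N : ℕ) (ω : Ω), ∑ n ∈ Finset.range N, h n ω
      ≤ (1 / (1 - r)) * (2 * |ξ ω| ^ p + 2 * |ξ ω|) := by
    intro N ω
    set x : ℝ := |ξ ω| with hxdef
    have hx0 : (0 : ℝ) ≤ x := abs_nonneg _
    have hxp0 : (0 : ℝ) ≤ x ^ p := Real.rpow_nonneg hx0 p
    set M : ℕ := ⌈x ^ p⌉₊ with hMdef
    have hterm : ∀ n : ℕ, h n ω ≤ (if n < M then (n : ℝ) ^ (-r) else 0) * x := by
      intro n
      by_cases hcase : ω ∈ (A n)ᶜ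
      · have hlt : (n : ℝ) ^ r < x := by
          have : ¬ (|ξ ω| ≤ (n : ℝ) ^ r) := hcase
          exact not_le.mp this
        have hn : (n : ℝ) < x ^ p := by
          have h5 := Real.rpow_lt_rpow (Real.rpow_nonneg (Nat.cast_nonneg n) r) hlt hp0
          rwa [← Real.rpow_mul (Nat.cast_nonneg n),
            show r * p = 1 by rw [hrdef]; field_simp, Real.rpow_one] at h5
        have hM : n < M := Nat.lt_ceil.mpr hn
        simp only [hhdef]
        rw [Set.indicator_of_mem hcase, if_pos hM, mul_comm]
      · simp only [hhdef]
        rw [Set.indicator_of_notMem hcase]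
        apply mul_nonneg _ hx0
        split
        · exact Real.rpow_nonneg (Nat.cast_nonneg n) _
        · exact le_rfl
    have hsum : ∑ n ∈ Finset.range N, (if n < M then (n : ℝ) ^ (-r) else 0)
        ≤ (1 / (1 - r)) * (M : ℝ) ^ (1 - r) := by
      calc ∑ n ∈ Finset.range N, (if n < M then (n : ℝ) ^ (-r) else 0)
          = ∑ n ∈ (Finset.range N).filter (· < M), (n : ℝ) ^ (-r) :=
            (Finset.sum_filter _ _).symm
        _ ≤ ∑ n ∈ Finset.range M, (n : ℝ) ^ (-r) := by
            apply Finset.sum_le_sum_of_subset_of_nonneg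
            · intro i hi
              simp only [Finset.mem_filter] at hi
              exact Finset.mem_range.mpr hi.2
            · intro i _ _
              exact Real.rpow_nonneg (Nat.cast_nonneg i) _
        _ ≤ (1 / (1 - r)) * (M : ℝ) ^ (1 - r) := sum_rpow_neg_le hr0 hr1 M
    have hMle : (M : ℝ) ≤ x ^ p + 1 := (Nat.ceil_lt_add_one hxp0).le
    have hM1 : (M : ℝ) ^ (1 - r) ≤ 2 * x ^ (p - 1) + 2 := by
      rcases le_or_gt (x ^ p) 1 with hc | hc
      · have h2 : (M : ℝ) ≤ 2 := by linarith
        have : (M : ℝ) ^ (1 - r) ≤ (2 : ℝ) ^ (1 - r) :=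
          Real.rpow_le_rpow (Nat.cast_nonneg M) h2 (by linarith)
        have h3 : (2 : ℝ) ^ (1 - r) ≤ (2 : ℝ) ^ (1 : ℝ) :=
          Real.rpow_le_rpow_of_exponent_le one_le_two (by linarith)
        rw [Real.rpow_one] at h3
        have h4 : (0 : ℝ) ≤ x ^ (p - 1) := Real.rpow_nonneg hx0 _
        linarith
      · have h2x : (M : ℝ) ≤ 2 * x ^ p := by linarith
        have e1 : (x ^ p) ^ (1 - r) = x ^ (p - 1) := by
          rw [← Real.rpow_mul hx0, show p * (1 - r) = p - 1 by rw [hrdef]; field_simp]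
        calc (M : ℝ) ^ (1 - r) ≤ (2 * x ^ p) ^ (1 - r) :=
              Real.rpow_le_rpow (Nat.cast_nonneg M) h2x (by linarith)
          _ = (2 : ℝ) ^ (1 - r) * (x ^ p) ^ (1 - r) := Real.mul_rpow (by norm_num) hxp0
          _ ≤ 2 * x ^ (p - 1) := by
              rw [e1]
              apply mul_le_mul_of_nonneg_right _ (Real.rpow_nonneg hx0 _)
              have h3 : (2 : ℝ) ^ (1 - r) ≤ (2 : ℝ) ^ (1 : ℝ) :=
                Real.rpow_le_rpow_of_exponent_le one_le_two (by linarith)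
              rwa [Real.rpow_one] at h3
          _ ≤ 2 * x ^ (p - 1) + 2 := by linarith
    have e2 : x ^ (p - 1) * x = x ^ p := by
      rw [show p = (p - 1) + 1 by ring, Real.rpow_add' hx0 (by simp; linarith),
        Real.rpow_one]
      ring_nf
    calc ∑ n ∈ Finset.range N, h n ω
        ≤ ∑ n ∈ Finset.range N, (if n < M then (n : ℝ) ^ (-r) else 0) * x :=
          Finset.sum_le_sum (fun n _ => hterm n)
      _ = (∑ n ∈ Finset.range N, (if n < M then (n : ℝ) ^ (-r) else 0)) * x :=
          (Finset.sum_mul _ _ _).symm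
      _ ≤ ((1 / (1 - r)) * (M : ℝ) ^ (1 - r)) * x := by
          apply mul_le_mul_of_nonneg_right hsum hx0
      _ ≤ (1 / (1 - r)) * (2 * x ^ p + 2 * x) := by
          have hq0 : (0 : ℝ) < 1 / (1 - r) := by
            have : (0:ℝ) < 1 - r := by linarith
            positivity
          have : (M : ℝ) ^ (1 - r) * x ≤ 2 * x ^ p + 2 * x := by
            calc (M : ℝ) ^ (1 - r) * x ≤ (2 * x ^ (p - 1) + 2) * x :=
                  mul_le_mul_of_nonneg_right hM1 hx0
              _ = 2 * (x ^ (p - 1) * x) + 2 * x := by ring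
              _ = 2 * x ^ p + 2 * x := by rw [e2]
          calc (1 / (1 - r)) * (M : ℝ) ^ (1 - r) * x
              = (1 / (1 - r)) * ((M : ℝ) ^ (1 - r) * x) := by ring
            _ ≤ (1 / (1 - r)) * (2 * x ^ p + 2 * x) :=
                mul_le_mul_of_nonneg_left this hq0.le
  have gInt : Integrable (fun ω => (1 / (1 - r)) * (2 * |ξ ω| ^ p + 2 * |ξ ω|)) μ :=
    (((hmom.const_mul 2).add (hint.abs.const_mul 2)).const_mul _)
  apply summable_of_sum_range_le (c := ∫ ω, (1 / (1 - r)) * (2 * |ξ ω| ^ p + 2 * |ξ ω|) ∂μ)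
  · intro n
    exact mul_nonneg (Real.rpow_nonneg (Nat.cast_nonneg n) _) (abs_nonneg _)
  · intro N
    calc ∑ n ∈ Finset.range N, (n : ℝ) ^ (-r) * |∫ ω in A n, ξ ω ∂μ|
        ≤ ∑ n ∈ Finset.range N, ∫ ω, h n ω ∂μ :=
          Finset.sum_le_sum (fun n _ => key1 n)
      _ = ∫ ω, ∑ n ∈ Finset.range N, h n ω ∂μ :=
          (integral_finset_sum _ (fun n _ => hInt n)).symm
      _ ≤ ∫ ω, (1 / (1 - r)) * (2 * |ξ ω| ^ p + 2 * |ξ ω|) ∂μ :=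
          integral_mono (integrable_finset_sum _ (fun n _ => hInt n)) gInt
            (fun ω => key2 N ω)
end

section
/- Let ξ, ξ₁, ξ₂, … be i.i.d. random variables and p ∈ (0,2). If n^{-1/p} Σ_{k≤n} ξ_k converges almost surely to a finite limit, then E|ξ|^p < ∞. -/
/-!
From the almost sure convergence of `n^{-1/p} S_n` one gets `ξ_n / (n+1)^{1/p} → 0` a.s., so
almost surely only finitely many of the independent events `{|ξ_n|^p ≥ n + 1}` occur. By the
second Borel–Cantelli lemma their probabilities, which by identical distribution are the tail
probabilities `P(|ξ_0|^p ≥ n + 1)`, have a finite sum, and this sum bounds `E|ξ_0|^p - 1`.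
-/

open MeasureTheory ProbabilityTheory Filter
open scoped ENNReal Topology

theorem tendsto_div_succ_of_tendsto_sum_div {x b : ℕ → ℝ} {L : ℝ}
    (hb : ∀ᶠ n in atTop, b n ≠ 0) (hratio : Tendsto (fun n => b n / b (n + 1)) atTop (𝓝 1))
    (h : Tendsto (fun n => (∑ k ∈ Finset.range n, x k) / b n) atTop (𝓝 L)) :
    Tendsto (fun n => x n / b (n + 1)) atTop (𝓝 0) := by
  have hdiff := (h.comp (tendsto_add_atTop_nat 1)).sub (hratio.mul h)
  rw [one_mul, sub_self] at hdiff
  refine hdiff.congr' ?_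
  filter_upwards [hb] with n hn
  simp only [Function.comp_apply, Finset.sum_range_succ]
  field_simp
  ring

theorem eventually_abs_rpow_lt_succ_of_tendsto_rpow_neg_mul_sum {x : ℕ → ℝ} {p L : ℝ}
    (hp : 0 < p)
    (h : Tendsto (fun n : ℕ => (n : ℝ) ^ (-(1 / p)) * ∑ k ∈ Finset.range n, x k) atTop (𝓝 L)) :
    ∀ᶠ n : ℕ in atTop, |x n| ^ p < n + 1 := by
  set b : ℕ → ℝ := fun n => (n : ℝ) ^ p⁻¹
  have hb : ∀ᶠ n in atTop, b n ≠ 0 := by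
    filter_upwards [eventually_ne_atTop 0] with n hn
    positivity
  have hratio : Tendsto (fun n => b n / b (n + 1)) atTop (𝓝 1) := by
    have := ((Real.continuousAt_rpow_const 1 p⁻¹ (Or.inl one_ne_zero)).tendsto).comp
      (tendsto_natCast_div_add_atTop (1 : ℝ))
    rw [Real.one_rpow] at this
    refine this.congr fun n => ?_
    simp only [b, Function.comp_apply, Nat.cast_add, Nat.cast_one]
    exact Real.div_rpow n.cast_nonneg (by positivity) _
  have hsum : Tendsto (fun n => (∑ k ∈ Finset.range n, x k) / b n) atTop (𝓝 L) := by
    refine h.congr fun n => ?_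
    rw [Real.rpow_neg n.cast_nonneg, one_div, inv_mul_eq_div]
  have hsmall := (tendsto_div_succ_of_tendsto_sum_div hb hratio hsum).abs
  rw [abs_zero] at hsmall
  filter_upwards [hsmall.eventually (gt_mem_nhds one_pos)] with n hn
  have hpos : 0 < b (n + 1) := by positivity
  rw [abs_div, abs_of_pos hpos, div_lt_one hpos] at hn
  exact_mod_cast (Real.lt_rpow_inv_iff_of_pos (abs_nonneg _) (by positivity) hp).1 hn

theorem ProbabilityTheory.iIndepFun.iIndepSet_preimage {Ω ι β : Type*} {_ : MeasurableSpace Ω}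
    {_ : MeasurableSpace β} {μ : Measure Ω} {ξ : ι → Ω → β} (h : iIndepFun ξ μ)
    (hξ : ∀ i, Measurable (ξ i)) {D : ι → Set β} (hD : ∀ i, MeasurableSet (D i)) :
    iIndepSet (fun i => ξ i ⁻¹' D i) μ :=
  (iIndepSet_iff_meas_biInter fun i => (hD i).preimage (hξ i)).2 fun s =>
    h.measure_inter_preimage_eq_mul s fun i _ => hD i

theorem ProbabilityTheory.tsum_measure_ne_top_of_ae_eventually_notMem {Ω : Type*}
    {_ : MeasurableSpace Ω} {μ : Measure Ω} {s : ℕ → Set Ω} (hsm : ∀ n, MeasurableSet (s n))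
    (hs : iIndepSet s μ) (h : ∀ᵐ ω ∂μ, ∀ᶠ n in atTop, ω ∉ s n) :
    ∑' n, μ (s n) ≠ ∞ := by
  intro htop
  have : IsProbabilityMeasure μ := hs.isProbabilityMeasure
  have hnull : μ (limsup s atTop) = 0 := by
    rw [measure_eq_zero_iff_ae_notMem]
    filter_upwards [h] with ω hω
    simpa [mem_limsup_iff_frequently_mem, not_frequently] using hω
  simp [measure_limsup_eq_one hsm hs htop] at hnull

theorem ENNReal.ofReal_le_one_add_tsum_ite (y : ℝ) :
    ENNReal.ofReal y ≤ 1 + ∑' n : ℕ, if (n : ℝ) + 1 ≤ y then 1 else 0 := by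
  calc ENNReal.ofReal y
      ≤ ENNReal.ofReal ((⌊y⌋₊ : ℝ) + 1) := ENNReal.ofReal_le_ofReal (Nat.lt_floor_add_one y).le
    _ = 1 + ∑ n ∈ Finset.range ⌊y⌋₊, if (n : ℝ) + 1 ≤ y then 1 else 0 := by
        rw [Finset.sum_congr rfl fun n hn => if_pos ?_]
        · rw [Finset.sum_const, Finset.card_range, nsmul_one,
            ENNReal.ofReal_add (Nat.cast_nonneg _) zero_le_one, ENNReal.ofReal_natCast,
            ENNReal.ofReal_one, add_comm]
        · exact_mod_cast (Nat.le_floor_iff' n.succ_ne_zero).1 (Finset.mem_range.1 hn)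
    _ ≤ 1 + ∑' n : ℕ, if (n : ℝ) + 1 ≤ y then 1 else 0 := by
        gcongr
        exact ENNReal.sum_le_tsum _

theorem MeasureTheory.integrable_of_tsum_measure_le_ne_top {Ω : Type*} {_ : MeasurableSpace Ω}
    {μ : Measure Ω} [IsFiniteMeasure μ] {Y : Ω → ℝ} (hY : Measurable Y) (h0 : 0 ≤ Y)
    (h : ∑' n : ℕ, μ {ω | (n : ℝ) + 1 ≤ Y ω} ≠ ∞) : Integrable Y μ := by
  have hm : ∀ n : ℕ, MeasurableSet {ω | (n : ℝ) + 1 ≤ Y ω} :=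
    fun n => measurableSet_le measurable_const hY
  refine ⟨hY.aestronglyMeasurable, ?_⟩
  rw [hasFiniteIntegral_iff_ofReal (.of_forall h0)]
  calc ∫⁻ ω, ENNReal.ofReal (Y ω) ∂μ
      ≤ ∫⁻ ω, 1 + ∑' n : ℕ, {ω | (n : ℝ) + 1 ≤ Y ω}.indicator 1 ω ∂μ := by
        refine lintegral_mono fun ω => ?_
        simpa only [Set.indicator_apply, Set.mem_ofPred_eq, Pi.one_apply]
          using ENNReal.ofReal_le_one_add_tsum_ite (Y ω)
    _ = μ Set.univ + ∑' n : ℕ, μ {ω | (n : ℝ) + 1 ≤ Y ω} := by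
        rw [lintegral_add_left measurable_const, lintegral_one,
          lintegral_tsum fun n => (measurable_one.indicator (hm n)).aemeasurable]
        simp only [lintegral_indicator_one (hm _)]
    _ < ∞ := ENNReal.add_lt_top.2 ⟨measure_lt_top μ _, h.lt_top⟩

theorem stmt_7_general {Ω : Type*} [MeasurableSpace Ω] (μ : Measure Ω) [IsProbabilityMeasure μ]
    (ξ : ℕ → Ω → ℝ) (hmeas : ∀ n, Measurable (ξ n))
    (hindep : iIndepFun ξ μ)
    (hident : ∀ n, IdentDistrib (ξ n) (ξ 0) μ μ)
    (p : ℝ) (hp0 : 0 < p)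
    (hconv : ∀ᵐ ω ∂μ, ∃ L : ℝ,
      Tendsto (fun n : ℕ => (n : ℝ) ^ (-(1 / p)) * ∑ k ∈ Finset.range n, ξ k ω)
        atTop (nhds L)) :
    Integrable (fun ω => |ξ 0 ω| ^ p) μ := by
  set D : ℕ → Set ℝ := fun n => {x | (n : ℝ) + 1 ≤ |x| ^ p}
  have hD : ∀ n, MeasurableSet (D n) :=
    fun n => measurableSet_le measurable_const (measurable_id.abs.pow_const p)
  have hfinitely : ∀ᵐ ω ∂μ, ∀ᶠ n in atTop, ω ∉ ξ n ⁻¹' D n := by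
    filter_upwards [hconv] with ω ⟨L, hL⟩
    simpa [D] using eventually_abs_rpow_lt_succ_of_tendsto_rpow_neg_mul_sum hp0 hL
  have hsum := tsum_measure_ne_top_of_ae_eventually_notMem (fun n => (hD n).preimage (hmeas n))
    (hindep.iIndepSet_preimage hmeas hD) hfinitely
  refine integrable_of_tsum_measure_le_ne_top ((hmeas 0).abs.pow_const p)
    (fun ω => by positivity) ?_
  rwa [tsum_congr fun n => (hident n).measure_mem_eq (hD n)] at hsum

theorem stmt_7 {Ω : Type*} [MeasurableSpace Ω] (μ : Measure Ω) [IsProbabilityMeasure μ]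
    (ξ : ℕ → Ω → ℝ) (hmeas : ∀ n, Measurable (ξ n))
    (hindep : iIndepFun ξ μ)
    (hident : ∀ n, IdentDistrib (ξ n) (ξ 0) μ μ)
    (p : ℝ) (hp0 : 0 < p) (hp2 : p < 2)
    (hconv : ∀ᵐ ω ∂μ, ∃ L : ℝ,
      Tendsto (fun n : ℕ => (n : ℝ) ^ (-(1 / p)) * ∑ k ∈ Finset.range n, ξ k ω)
        atTop (nhds L)) :
    Integrable (fun ω => |ξ 0 ω| ^ p) μ :=
  stmt_7_general μ ξ hmeas hindep hident p hp0 hconv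
end

section
/- Let a, b ∈ ℝ^m be unit vectors with |aᵀb| ≤ μ < 1, and let y ∈ ℝ^m be a unit vector with |aᵀy| ≤ μ and |bᵀy| ≤ μ. Then the orthogonal projection P of y onto span{a,b} satisfies ‖Py‖ ≤ (2μ + 2μ²)/(1 − μ²) = 2μ/(1−μ). -/
open RealInnerProductSpace

theorem stmt_11 {m : ℕ} (a b y : EuclideanSpace ℝ (Fin m))
    (ha : ‖a‖ = 1) (hb : ‖b‖ = 1) (hy : ‖y‖ = 1)
    (μ : ℝ) (hμ0 : 0 < μ) (hμ1 : μ < 1)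
    (hab : |⟪a, b⟫| ≤ μ) (hay : |⟪a, y⟫| ≤ μ) (hby : |⟪b, y⟫| ≤ μ)
    (Py : EuclideanSpace ℝ (Fin m))
    (hPy : Py = (1 / (1 - ⟪a, b⟫ ^ 2)) •
      (⟪a, y⟫ • a + ⟪b, y⟫ • b - (⟪a, b⟫ * ⟪a, y⟫) • b - (⟪a, b⟫ * ⟪b, y⟫) • a)) :
    ‖Py‖ ≤ 2 * μ / (1 - μ) := by
  set t := ⟪a, b⟫ with htdef
  set α := ⟪a, y⟫ with hαdef
  set β := ⟪b, y⟫ with hβdef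
  have ht2 : t ^ 2 ≤ μ ^ 2 := by
    have h := pow_le_pow_left₀ (abs_nonneg t) hab 2
    rwa [sq_abs] at h
  have hμ2 : μ ^ 2 < 1 := by nlinarith
  have hpos : 0 < 1 - t ^ 2 := by nlinarith
  have hv : α • a + β • b - (t * α) • b - (t * β) • a
      = (α - t * β) • a + (β - t * α) • b := by module
  have hnv : ‖α • a + β • b - (t * α) • b - (t * β) • a‖ ≤ 2 * μ + 2 * μ ^ 2 := by
    rw [hv]
    calc ‖(α - t * β) • a + (β - t * α) • b‖
        ≤ ‖(α - t * β) • a‖ + ‖(β - t * α) • b‖ := norm_add_le _ _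
      _ = |α - t * β| + |β - t * α| := by
          rw [norm_smul, norm_smul, ha, hb]; simp [Real.norm_eq_abs]
      _ ≤ (|α| + |t| * |β|) + (|β| + |t| * |α|) := by
          gcongr <;>
            [exact (abs_sub _ _).trans (by rw [abs_mul]);
             exact (abs_sub _ _).trans (by rw [abs_mul])]
      _ ≤ (μ + μ * μ) + (μ + μ * μ) := by
          have h1 : |t| * |β| ≤ μ * μ := by
            apply mul_le_mul hab hby (abs_nonneg _) hμ0.le
          have h2 : |t| * |α| ≤ μ * μ := by
            apply mul_le_mul hab hay (abs_nonneg _) hμ0.le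
          gcongr
      _ = 2 * μ + 2 * μ ^ 2 := by ring
  rw [hPy, norm_smul]
  have : ‖(1 : ℝ) / (1 - t ^ 2)‖ = 1 / (1 - t ^ 2) := by
    rw [Real.norm_eq_abs, abs_of_pos (by positivity)]
  rw [this]
  have hle : (1 : ℝ) / (1 - t ^ 2) ≤ 1 / (1 - μ ^ 2) := by
    apply one_div_le_one_div_of_le (by nlinarith) (by nlinarith)
  calc 1 / (1 - t ^ 2) * ‖α • a + β • b - (t * α) • b - (t * β) • a‖
      ≤ 1 / (1 - μ ^ 2) * (2 * μ + 2 * μ ^ 2) := by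
        apply mul_le_mul hle hnv (norm_nonneg _) (one_div_pos.mpr (by nlinarith)).le
    _ = 2 * μ / (1 - μ) := by
        have h1 : (1:ℝ) - μ ≠ 0 := by linarith
        have h2 : (1:ℝ) - μ ^ 2 ≠ 0 := by nlinarith
        field_simp
        ring
end

section
/- Let Φ ∈ ℝ^{m×n} have unit-norm columns φ₁,…,φₙ with mutual coherence μ(Φ) = max_{i≠j} |φᵢᵀφⱼ| ≤ 1/f for some f > 1. Let x be s-sparse with support S = {1,…,s}, b = Φx, and let i, j ∉ S, i ≠ j. Then the projection of b onto span{φᵢ, φⱼ} satisfies ‖Proj(b)‖ ≤ (2f + 2)/(f² − 1) · Σ_{k=1}^s |x_k|. -/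
/-!
Write the projection as `p = α φᵢ + β φⱼ` and put `a = |α| + |β|`, `T = ∑ |x_k|`, `c = 1/f`.
Since `b - p ⟂ p`, `‖p‖² = ⟪p, b⟫ = ∑ x_k ⟪p, φ_k⟫ ≤ a c T` by coherence. On the other hand
near-orthogonality of `φᵢ, φⱼ` gives `‖p‖² ≥ (1 - c)(α² + β²) ≥ (1 - c) a² / 2`. The two bounds
force `a ≤ 2cT / (1 - c)`, hence `‖p‖² ≤ 2c²T² / (1 - c) ≤ (2cT / (1 - c))²`, and
`2c / (1 - c) = (2f + 2) / (f² - 1)`.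
-/

open RealInnerProductSpace Submodule

lemma le_two_mul_div_one_sub_mul_of_sq_le {P a c T : ℝ} (hP : 0 ≤ P) (ha : 0 ≤ a) (hT : 0 ≤ T)
    (hc0 : 0 ≤ c) (hc : c < 1) (hup : P ^ 2 ≤ a * c * T) (hlow : (1 - c) * a ^ 2 ≤ 2 * P ^ 2) :
    P ≤ 2 * c / (1 - c) * T := by
  have h1c : 0 < 1 - c := by linarith
  have ha_le : (1 - c) * a ≤ 2 * c * T := by
    rcases ha.eq_or_lt with rfl | ha_pos
    · simpa using mul_nonneg (mul_nonneg zero_le_two hc0) hT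
    · exact le_of_mul_le_mul_right (by nlinarith) ha_pos
  have hsq : ((1 - c) * P) ^ 2 ≤ (2 * c * T) ^ 2 :=
    calc ((1 - c) * P) ^ 2 ≤ (1 - c) * ((1 - c) * a) * (c * T) := by
          nlinarith [mul_le_mul_of_nonneg_left hup (sq_nonneg (1 - c))]
      _ ≤ (1 - c) * (2 * c * T) * (c * T) := by gcongr
      _ ≤ (2 * c * T) ^ 2 := by nlinarith [mul_nonneg (mul_nonneg hc0 hT) (mul_nonneg hc0 hT)]
  rw [div_mul_eq_mul_div, le_div_iff₀ h1c, mul_comm]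
  exact (pow_le_pow_iff_left₀ (by positivity) (by positivity) two_ne_zero).mp hsq

variable {E : Type*} [NormedAddCommGroup E] [InnerProductSpace ℝ E]

lemma real_inner_starProjection_self (K : Submodule ℝ E) [K.HasOrthogonalProjection] (b : E) :
    ⟪K.starProjection b, b⟫ = ‖K.starProjection b‖ ^ 2 := by
  have h := K.starProjection_inner_eq_zero b _ (K.starProjection_apply_mem b)
  rw [inner_sub_left, sub_eq_zero, real_inner_self_eq_norm_sq, real_inner_comm] at h
  exact h

lemma abs_real_inner_smul_add_smul_le {u v w : E} {c : ℝ} (hu : |⟪u, w⟫| ≤ c)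
    (hv : |⟪v, w⟫| ≤ c) (α β : ℝ) :
    |⟪α • u + β • v, w⟫| ≤ (|α| + |β|) * c := by
  rw [inner_add_left, real_inner_smul_left, real_inner_smul_left]
  calc |α * ⟪u, w⟫ + β * ⟪v, w⟫| ≤ |α| * |⟪u, w⟫| + |β| * |⟪v, w⟫| := by
        simpa only [abs_mul] using abs_add_le (α * ⟪u, w⟫) (β * ⟪v, w⟫)
    _ ≤ (|α| + |β|) * c := by
        nlinarith [mul_le_mul_of_nonneg_left hu (abs_nonneg α),
          mul_le_mul_of_nonneg_left hv (abs_nonneg β)]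

lemma real_inner_sum_smul_le {ι : Type*} (p : E) (S : Finset ι) (w : ι → E) (x : ι → ℝ) {C : ℝ}
    (h : ∀ k ∈ S, |⟪p, w k⟫| ≤ C) :
    ⟪p, ∑ k ∈ S, x k • w k⟫ ≤ C * ∑ k ∈ S, |x k| := by
  rw [inner_sum, Finset.mul_sum]
  refine Finset.sum_le_sum fun k hk => ?_
  rw [real_inner_smul_right, mul_comm C]
  calc x k * ⟪p, w k⟫ ≤ |x k| * |⟪p, w k⟫| := (le_abs_self _).trans (abs_mul _ _).le
    _ ≤ |x k| * C := mul_le_mul_of_nonneg_left (h k hk) (abs_nonneg _)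

lemma norm_smul_add_smul_sq {u v : E} (hu : ‖u‖ = 1) (hv : ‖v‖ = 1) (α β : ℝ) :
    ‖α • u + β • v‖ ^ 2 = α ^ 2 + β ^ 2 + 2 * α * β * ⟪u, v⟫ := by
  rw [norm_add_sq_real, norm_smul, norm_smul, real_inner_smul_left, real_inner_smul_right, hu, hv,
    mul_pow, mul_pow, Real.norm_eq_abs, Real.norm_eq_abs, sq_abs, sq_abs]
  ring

lemma one_sub_mul_sq_abs_add_abs_le {u v : E} (hu : ‖u‖ = 1) (hv : ‖v‖ = 1) {c : ℝ}
    (huv : |⟪u, v⟫| ≤ c) (α β : ℝ) :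
    (1 - c) * (|α| + |β|) ^ 2 ≤ 2 * ‖α • u + β • v‖ ^ 2 := by
  rw [norm_smul_add_smul_sq hu hv]
  have hαβ : |α * β * ⟪u, v⟫| ≤ |α| * |β| * c := by
    rw [abs_mul, abs_mul]
    exact mul_le_mul_of_nonneg_left huv (by positivity)
  have hc : 0 ≤ 1 + c := by linarith [abs_nonneg ⟪u, v⟫]
  -- the difference of the two sides is at least (1 + c) (|α| - |β|)²
  nlinarith [mul_nonneg hc (sq_nonneg (|α| - |β|)), sq_abs α, sq_abs β,
    neg_abs_le (α * β * ⟪u, v⟫)]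

lemma norm_le_of_mem_span_pair {ι : Type*} {u v p : E} (hu : ‖u‖ = 1) (hv : ‖v‖ = 1) {c : ℝ}
    (hc : c < 1) (huv : |⟪u, v⟫| ≤ c) (hp : p ∈ span ℝ {u, v}) (S : Finset ι) (w : ι → E)
    (x : ι → ℝ) (huw : ∀ k ∈ S, |⟪u, w k⟫| ≤ c) (hvw : ∀ k ∈ S, |⟪v, w k⟫| ≤ c)
    (hpb : ‖p‖ ^ 2 ≤ ⟪p, ∑ k ∈ S, x k • w k⟫) :
    ‖p‖ ≤ 2 * c / (1 - c) * ∑ k ∈ S, |x k| := by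
  obtain ⟨α, β, rfl⟩ := mem_span_pair.mp hp
  refine le_two_mul_div_one_sub_mul_of_sq_le (norm_nonneg _) (by positivity)
    (Finset.sum_nonneg fun k _ => abs_nonneg (x k)) ((abs_nonneg _).trans huv) hc ?_
    (one_sub_mul_sq_abs_add_abs_le hu hv huv α β)
  refine hpb.trans (real_inner_sum_smul_le _ S w x fun k hk => ?_)
  exact abs_real_inner_smul_add_smul_le (huw k hk) (hvw k hk) α β

theorem norm_starProjection_le_of_le_span_pair {ι : Type*} {u v : E} (hu : ‖u‖ = 1)
    (hv : ‖v‖ = 1) {c : ℝ} (hc : c < 1) (huv : |⟪u, v⟫| ≤ c) (K : Submodule ℝ E)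
    [K.HasOrthogonalProjection] (hK : K ≤ span ℝ {u, v}) (S : Finset ι) (w : ι → E)
    (x : ι → ℝ) (huw : ∀ k ∈ S, |⟪u, w k⟫| ≤ c) (hvw : ∀ k ∈ S, |⟪v, w k⟫| ≤ c) :
    ‖K.starProjection (∑ k ∈ S, x k • w k)‖ ≤ 2 * c / (1 - c) * ∑ k ∈ S, |x k| :=
  norm_le_of_mem_span_pair hu hv hc huv (hK (K.starProjection_apply_mem _)) S w x huw hvw
    (real_inner_starProjection_self K _).ge

theorem stmt_12_general {m n : ℕ} (φ : Fin n → EuclideanSpace ℝ (Fin m))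
    (hnorm : ∀ i, ‖φ i‖ = 1) (f : ℝ) (hf : 1 < f)
    (hcoh : ∀ i j, i ≠ j → |⟪φ i, φ j⟫| ≤ 1 / f)
    (S : Finset (Fin n)) (x : Fin n → ℝ)
    (b : EuclideanSpace ℝ (Fin m)) (hb : b = ∑ k ∈ S, x k • φ k)
    (i j : Fin n) (hi : i ∉ S) (hj : j ∉ S) (hij : i ≠ j) :
    ‖(Submodule.orthogonalProjectionOnto
        (Submodule.span ℝ ({φ i, φ j} : Set (EuclideanSpace ℝ (Fin m)))) b :
        EuclideanSpace ℝ (Fin m))‖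
      ≤ (2 * f + 2) / (f ^ 2 - 1) * ∑ k ∈ S, |x k| := by
  have hconst : (2 * f + 2) / (f ^ 2 - 1) = 2 * (1 / f) / (1 - 1 / f) := by
    have hf1 : f - 1 ≠ 0 := by linarith
    have hf2 : f ^ 2 - 1 ≠ 0 := by nlinarith
    field_simp
    ring
  have hne : ∀ l, l ∉ S → ∀ k ∈ S, l ≠ k := fun l hl k hk h => hl (h ▸ hk)
  rw [coe_orthogonalProjectionOnto_apply, hb, hconst]
  exact norm_starProjection_le_of_le_span_pair (hnorm i) (hnorm j)
    ((div_lt_one (by linarith)).mpr hf) (hcoh i j hij) _ le_rfl S φ x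
    (fun k hk => hcoh i k (hne i hi k hk)) (fun k hk => hcoh j k (hne j hj k hk))

theorem stmt_12 {m n : ℕ} (φ : Fin n → EuclideanSpace ℝ (Fin m))
    (hnorm : ∀ i, ‖φ i‖ = 1) (f : ℝ) (hf : 1 < f)
    (hcoh : ∀ i j, i ≠ j → |⟪φ i, φ j⟫| ≤ 1 / f)
    (S : Finset (Fin n)) (x : Fin n → ℝ) (hsupp : ∀ k, k ∉ S → x k = 0)
    (b : EuclideanSpace ℝ (Fin m)) (hb : b = ∑ k ∈ S, x k • φ k)
    (i j : Fin n) (hi : i ∉ S) (hj : j ∉ S) (hij : i ≠ j) :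
    ‖(Submodule.orthogonalProjectionOnto
        (Submodule.span ℝ ({φ i, φ j} : Set (EuclideanSpace ℝ (Fin m)))) b :
        EuclideanSpace ℝ (Fin m))‖
      ≤ (2 * f + 2) / (f ^ 2 - 1) * ∑ k ∈ S, |x k| :=
  stmt_12_general φ hnorm f hf hcoh S x b hb i j hi hj hij
end

section
/- Let Φ ∈ ℝ^{m×n} have unit-norm columns with μ(Φ) ≤ 1/f (f > 1). Let x be supported on S = {1,…,s}, b = Φx, and suppose |x₁| = max_{1≤i≤s} |x_i|. Then for any j ≠ 1, the projection of b onto span{φ₁, φⱼ} satisfies ‖Proj(b)‖ ≥ (1/(1−|φ₁ᵀφⱼ|²))·[(1 − 2/f − 1/f²)|x₁| − (2/f + 2/f²)·Σ_{k=2}^s |x_k|]. -/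
/-!
Put `c = ⟪φ₁, φⱼ⟫` and `v = φ₁ - c φⱼ`, a vector of the plane `span {φ₁, φⱼ}` with `‖v‖² = 1 - c² ≤ 1`.
Testing `b` against `v` gives `‖Proj b‖ ≥ |⟪v, b⟫|`, and in `⟪v, b⟫` the `φ₁`-term contributes
`x₁ (1 - c²)` while each other term `x_k (⟪φ₁, φ_k⟫ - c ⟪φⱼ, φ_k⟫)` is at most `2 |x_k| / f` in size.
What remains is scalar arithmetic with `c² ≤ 1 / f²`.
-/

open RealInnerProductSpace

section InnerProductSpace

variable {E : Type*} [NormedAddCommGroup E] [InnerProductSpace ℝ E]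

theorem abs_inner_le_norm_mul_norm_orthogonalProjectionOnto {K : Submodule ℝ E}
    [K.HasOrthogonalProjection] {v : E} (hv : v ∈ K) (b : E) :
    |⟪v, b⟫| ≤ ‖v‖ * ‖(K.orthogonalProjectionOnto b : E)‖ := by
  rw [← K.inner_orthogonalProjectionOnto_eq_of_mem_left ⟨v, hv⟩ b]
  exact abs_real_inner_le_norm _ _

theorem norm_sub_inner_smul_sq {a w : E} (hw : ‖w‖ = 1) :
    ‖a - ⟪a, w⟫ • w‖ ^ 2 = ‖a‖ ^ 2 - ⟪a, w⟫ ^ 2 := by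
  rw [norm_sub_sq_real, real_inner_smul_right, norm_smul, mul_pow, hw, Real.norm_eq_abs, sq_abs]
  ring

theorem norm_sub_inner_smul_le {a w : E} (hw : ‖w‖ = 1) : ‖a - ⟪a, w⟫ • w‖ ≤ ‖a‖ := by
  refine le_of_pow_le_pow_left₀ two_ne_zero (norm_nonneg a) ?_
  rw [norm_sub_inner_smul_sq hw]
  linarith [sq_nonneg ⟪a, w⟫]

theorem inner_sub_inner_smul_sum_eq {ι : Type*} [DecidableEq ι] {φ : ι → E} {i j : ι}
    (hφi : ‖φ i‖ = 1) {S : Finset ι} (hi : i ∈ S) (x : ι → ℝ) :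
    ⟪φ i - ⟪φ i, φ j⟫ • φ j, ∑ k ∈ S, x k • φ k⟫ =
      x i * (1 - ⟪φ i, φ j⟫ ^ 2) +
        ∑ k ∈ S.erase i, x k * (⟪φ i, φ k⟫ - ⟪φ i, φ j⟫ * ⟪φ j, φ k⟫) := by
  simp only [inner_sum, real_inner_smul_right, inner_sub_left, real_inner_smul_left]
  rw [← S.add_sum_erase _ hi, real_inner_self_eq_norm_sq, hφi, real_inner_comm (φ j)]
  simp only [mul_sub]
  ring

theorem abs_inner_sub_inner_smul_mul_inner_le {a w z : E} {μ : ℝ} (haz : |⟪a, z⟫| ≤ μ)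
    (haw : |⟪a, w⟫| ≤ μ) (hw : ‖w‖ = 1) (hz : ‖z‖ = 1) :
    |⟪a, z⟫ - ⟪a, w⟫ * ⟪w, z⟫| ≤ 2 * μ := by
  have hwz : |⟪w, z⟫| ≤ 1 := (abs_real_inner_le_norm w z).trans_eq (by rw [hw, hz, one_mul])
  calc |⟪a, z⟫ - ⟪a, w⟫ * ⟪w, z⟫| ≤ |⟪a, z⟫| + |⟪a, w⟫| * |⟪w, z⟫| := by
        rw [← abs_mul]; exact abs_sub _ _
    _ ≤ μ + μ * 1 := by gcongr; exact (abs_nonneg _).trans haw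
    _ = 2 * μ := by ring

theorem abs_coeff_sub_le_abs_inner_sub_inner_smul_sum {ι : Type*} [DecidableEq ι] {φ : ι → E}
    (hnorm : ∀ k, ‖φ k‖ = 1) {μ : ℝ} (hcoh : ∀ k l, k ≠ l → |⟪φ k, φ l⟫| ≤ μ)
    {S : Finset ι} (x : ι → ℝ) {i j : ι} (hi : i ∈ S) (hji : j ≠ i) :
    |x i| * (1 - ⟪φ i, φ j⟫ ^ 2) - 2 * μ * ∑ k ∈ S.erase i, |x k| ≤
      |⟪φ i - ⟪φ i, φ j⟫ • φ j, ∑ k ∈ S, x k • φ k⟫| := by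
  set c := ⟪φ i, φ j⟫
  have hc : c ^ 2 ≤ 1 := by
    rw [← sq_abs, sq_le_one_iff_abs_le_one, abs_abs]
    exact (abs_real_inner_le_norm _ _).trans_eq (by rw [hnorm, hnorm, one_mul])
  have hrest : |∑ k ∈ S.erase i, x k * (⟪φ i, φ k⟫ - c * ⟪φ j, φ k⟫)| ≤
      2 * μ * ∑ k ∈ S.erase i, |x k| := by
    rw [Finset.mul_sum]
    refine (Finset.abs_sum_le_sum_abs _ _).trans (Finset.sum_le_sum fun k hk => ?_)
    rw [abs_mul, mul_comm]
    exact mul_le_mul_of_nonneg_right (abs_inner_sub_inner_smul_mul_inner_le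
      (hcoh i k (Finset.ne_of_mem_erase hk).symm) (hcoh i j hji.symm) (hnorm j) (hnorm k))
      (abs_nonneg _)
  rw [inner_sub_inner_smul_sum_eq (hnorm i) hi]
  have hhead : |x i * (1 - c ^ 2)| = |x i| * (1 - c ^ 2) := by
    rw [abs_mul, abs_of_nonneg (sub_nonneg.2 hc)]
  linarith [abs_sub_abs_le_abs_add (x i * (1 - c ^ 2))
    (∑ k ∈ S.erase i, x k * (⟪φ i, φ k⟫ - c * ⟪φ j, φ k⟫))]

end InnerProductSpace

theorem one_div_one_sub_sq_mul_le_of_abs_le_one_div {f c a T : ℝ} (hf : 1 < f)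
    (hc : |c| ≤ 1 / f) (ha : 0 ≤ a) (hT : 0 ≤ T) :
    1 / (1 - c ^ 2) * ((1 - 2 / f - 1 / f ^ 2) * a - (2 / f + 2 / f ^ 2) * T) ≤
      a * (1 - c ^ 2) - 2 * (1 / f) * T := by
  set u := 1 / f
  have hu0 : 0 < u := by positivity
  have hu1 : u < 1 := (div_lt_one (by linarith)).2 hf
  have hcu : c ^ 2 ≤ u ^ 2 := sq_le_sq' (abs_le.1 hc).1 (abs_le.1 hc).2
  have hden : 0 < 1 - c ^ 2 := by nlinarith
  have hsq : (1 - u ^ 2) ^ 2 ≤ (1 - c ^ 2) ^ 2 := by gcongr; nlinarith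
  have hpoly : 0 ≤ u * (u ^ 3 - u + 2) := by have := pow_nonneg hu0.le 3; nlinarith
  rw [show 2 / f = 2 * u by ring, show 1 / f ^ 2 = u ^ 2 by ring,
    show 2 / f ^ 2 = 2 * u ^ 2 by ring, one_div_mul_eq_div, div_le_iff₀ hden]
  nlinarith [mul_nonneg ha hpoly, mul_le_mul_of_nonneg_left hsq ha,
    mul_nonneg hT (add_nonneg (sq_nonneg u) (mul_nonneg hu0.le (sq_nonneg c)))]

theorem stmt_13_general {m n : ℕ} (φ : Fin n → EuclideanSpace ℝ (Fin m))
    (hnorm : ∀ i, ‖φ i‖ = 1) (f : ℝ) (hf : 1 < f)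
    (hcoh : ∀ i j, i ≠ j → |⟪φ i, φ j⟫| ≤ 1 / f)
    (S : Finset (Fin n)) (x : Fin n → ℝ)
    (b : EuclideanSpace ℝ (Fin m)) (hb : b = ∑ k ∈ S, x k • φ k)
    (i₀ : Fin n) (hi₀ : i₀ ∈ S)
    (j : Fin n) (hj : j ≠ i₀) :
    (1 / (1 - ⟪φ i₀, φ j⟫ ^ 2)) *
        ((1 - 2 / f - 1 / f ^ 2) * |x i₀| -
          (2 / f + 2 / f ^ 2) * ∑ k ∈ S.erase i₀, |x k|)
      ≤ ‖(Submodule.orthogonalProjectionOnto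
          (Submodule.span ℝ ({φ i₀, φ j} : Set (EuclideanSpace ℝ (Fin m)))) b :
          EuclideanSpace ℝ (Fin m))‖ := by
  set K := Submodule.span ℝ ({φ i₀, φ j} : Set (EuclideanSpace ℝ (Fin m)))
  set v := φ i₀ - ⟪φ i₀, φ j⟫ • φ j
  have hvK : v ∈ K := K.sub_mem (Submodule.subset_span (by simp))
    (K.smul_mem _ (Submodule.subset_span (by simp)))
  have hv : ‖v‖ ≤ 1 := (norm_sub_inner_smul_le (hnorm j)).trans_eq (hnorm i₀)
  calc _ ≤ |x i₀| * (1 - ⟪φ i₀, φ j⟫ ^ 2) - 2 * (1 / f) * ∑ k ∈ S.erase i₀, |x k| :=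
        one_div_one_sub_sq_mul_le_of_abs_le_one_div hf (hcoh i₀ j hj.symm) (abs_nonneg _)
          (Finset.sum_nonneg fun _ _ => abs_nonneg _)
    _ ≤ |⟪v, b⟫| := hb ▸ abs_coeff_sub_le_abs_inner_sub_inner_smul_sum hnorm hcoh x hi₀ hj
    _ ≤ ‖v‖ * ‖(K.orthogonalProjectionOnto b : EuclideanSpace ℝ (Fin m))‖ :=
        abs_inner_le_norm_mul_norm_orthogonalProjectionOnto hvK b
    _ ≤ _ := mul_le_of_le_one_left (norm_nonneg _) hv

theorem stmt_13 {m n : ℕ} (φ : Fin n → EuclideanSpace ℝ (Fin m))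
    (hnorm : ∀ i, ‖φ i‖ = 1) (f : ℝ) (hf : 1 < f)
    (hcoh : ∀ i j, i ≠ j → |⟪φ i, φ j⟫| ≤ 1 / f)
    (S : Finset (Fin n)) (x : Fin n → ℝ) (hsupp : ∀ k, k ∉ S → x k = 0)
    (b : EuclideanSpace ℝ (Fin m)) (hb : b = ∑ k ∈ S, x k • φ k)
    (i₀ : Fin n) (hi₀ : i₀ ∈ S) (hmax : ∀ k ∈ S, |x k| ≤ |x i₀|)
    (j : Fin n) (hj : j ≠ i₀) :
    (1 / (1 - ⟪φ i₀, φ j⟫ ^ 2)) *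
        ((1 - 2 / f - 1 / f ^ 2) * |x i₀| -
          (2 / f + 2 / f ^ 2) * ∑ k ∈ S.erase i₀, |x k|)
      ≤ ‖(Submodule.orthogonalProjectionOnto
          (Submodule.span ℝ ({φ i₀, φ j} : Set (EuclideanSpace ℝ (Fin m)))) b :
          EuclideanSpace ℝ (Fin m))‖ :=
  stmt_13_general φ hnorm f hf hcoh S x b hb i₀ hi₀ j hj
end

section
/- Let Φ ∈ ℝ^{m×n} have unit-norm columns with μ(Φ) ≤ 1/f, let x be supported on S with |S| = s, b₀ = Φx, and let v be a noise vector with ‖v‖ ≤ ε. For i, j ∉ S, i ≠ j, the orthogonal projection of b = b₀ + v onto span{φᵢ, φⱼ} satisfies ‖Proj(b)‖ ≤ (2f+2)/(f²−1)·Σ_{k∈S}|x_k| + (2f(f+1)/(f²−1))·ε. -/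
/-!
Write the projection as `a φᵢ + c φⱼ`. Since it differs from `b` by a vector orthogonal to `φᵢ`
and `φⱼ`, we get `⟪b, φᵢ⟫ = a + c ⟪φⱼ, φᵢ⟫` and `⟪b, φⱼ⟫ = a ⟪φᵢ, φⱼ⟫ + c`. For `t ∉ S` the
coherence bound gives `|⟪b, φₜ⟫| ≤ B`, where `B = (∑ₖ |xₖ|) / f + ε`. Hence `|a| ≤ B + |c| / f`
and `|c| ≤ B + |a| / f`; adding, `(|a| + |c|)(1 - 1/f) ≤ 2B`, which bounds the norm of the projection.
-/

open RealInnerProductSpace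

variable {E : Type*} [NormedAddCommGroup E] [InnerProductSpace ℝ E]

theorem abs_inner_sum_smul_le {ι : Type*} (S : Finset ι) (x : ι → ℝ) (φ : ι → E) (u : E)
    {μ : ℝ} (hμ : ∀ k ∈ S, |⟪φ k, u⟫| ≤ μ) :
    |⟪∑ k ∈ S, x k • φ k, u⟫| ≤ μ * ∑ k ∈ S, |x k| := by
  rw [sum_inner, Finset.mul_sum]
  refine (Finset.abs_sum_le_sum_abs _ _).trans (Finset.sum_le_sum fun k hk => ?_)
  rw [real_inner_smul_left, abs_mul, mul_comm]
  exact mul_le_mul_of_nonneg_right (hμ k hk) (abs_nonneg _)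

theorem abs_inner_sum_smul_add_le {ι : Type*} (S : Finset ι) (x : ι → ℝ) (φ : ι → E)
    (v u : E) (hu : ‖u‖ = 1) {μ : ℝ} (hμ : ∀ k ∈ S, |⟪φ k, u⟫| ≤ μ) :
    |⟪∑ k ∈ S, x k • φ k + v, u⟫| ≤ μ * ∑ k ∈ S, |x k| + ‖v‖ := by
  have hv : |⟪v, u⟫| ≤ ‖v‖ := by simpa [hu] using abs_real_inner_le_norm v u
  rw [inner_add_left]
  exact (abs_add_le _ _).trans (add_le_add (abs_inner_sum_smul_le S x φ u hμ) hv)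

theorem norm_le_of_mem_span_pair_of_abs_inner_le {u w y : E} (hu : ‖u‖ = 1) (hw : ‖w‖ = 1)
    {γ B : ℝ} (hγ : |⟪u, w⟫| ≤ γ) (hγ₁ : γ < 1)
    (hy : y ∈ Submodule.span ℝ ({u, w} : Set E)) (hyu : |⟪y, u⟫| ≤ B) (hyw : |⟪y, w⟫| ≤ B) :
    ‖y‖ ≤ 2 * B / (1 - γ) := by
  obtain ⟨a, c, rfl⟩ := Submodule.mem_span_pair.mp hy
  have huu : ⟪u, u⟫ = 1 := by rw [real_inner_self_eq_norm_sq, hu, one_pow]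
  have hww : ⟪w, w⟫ = 1 := by rw [real_inner_self_eq_norm_sq, hw, one_pow]
  set g := ⟪u, w⟫
  have hyu' : ⟪a • u + c • w, u⟫ = a + c * g := by
    rw [inner_add_left, real_inner_smul_left, real_inner_smul_left, huu, real_inner_comm]; ring
  have hyw' : ⟪a • u + c • w, w⟫ = a * g + c := by
    rw [inner_add_left, real_inner_smul_left, real_inner_smul_left, hww]; ring
  have ha : |a| ≤ B + |c| * γ := calc
    |a| ≤ |a + c * g| + |c * g| := by simpa using abs_sub (a + c * g) (c * g)
    _ ≤ B + |c| * γ := by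
      rw [abs_mul, ← hyu']; exact add_le_add hyu (by gcongr)
  have hc : |c| ≤ B + |a| * γ := calc
    |c| ≤ |a * g + c| + |a * g| := by simpa using abs_sub (a * g + c) (a * g)
    _ ≤ B + |a| * γ := by
      rw [abs_mul, ← hyw']; exact add_le_add hyw (by gcongr)
  have hnorm : ‖a • u + c • w‖ ≤ |a| + |c| := by
    simpa [norm_smul, hu, hw] using norm_add_le (a • u) (c • w)
  rw [le_div_iff₀ (by linarith)]
  calc ‖a • u + c • w‖ * (1 - γ) ≤ (|a| + |c|) * (1 - γ) := by gcongr
    _ ≤ 2 * B := by linarith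

theorem stmt_15_general {m n : ℕ} (φ : Fin n → EuclideanSpace ℝ (Fin m))
    (hnorm : ∀ i, ‖φ i‖ = 1) (f : ℝ) (hf : 1 < f)
    (hcoh : ∀ i j, i ≠ j → |⟪φ i, φ j⟫| ≤ 1 / f)
    (S : Finset (Fin n)) (x : Fin n → ℝ)
    (b₀ : EuclideanSpace ℝ (Fin m)) (hb₀ : b₀ = ∑ k ∈ S, x k • φ k)
    (v : EuclideanSpace ℝ (Fin m)) (ε : ℝ) (hv : ‖v‖ ≤ ε)
    (b : EuclideanSpace ℝ (Fin m)) (hb : b = b₀ + v)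
    (i j : Fin n) (hi : i ∉ S) (hj : j ∉ S) (hij : i ≠ j) :
    ‖(Submodule.orthogonalProjectionOnto
        (Submodule.span ℝ ({φ i, φ j} : Set (EuclideanSpace ℝ (Fin m)))) b :
        EuclideanSpace ℝ (Fin m))‖
      ≤ (2 * f + 2) / (f ^ 2 - 1) * (∑ k ∈ S, |x k|)
        + (2 * f * (f + 1) / (f ^ 2 - 1)) * ε := by
  set K := Submodule.span ℝ ({φ i, φ j} : Set (EuclideanSpace ℝ (Fin m)))
  set P : EuclideanSpace ℝ (Fin m) := (K.orthogonalProjectionOnto b : EuclideanSpace ℝ (Fin m))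
  set B := 1 / f * ∑ k ∈ S, |x k| + ε with hB
  have hP : ∀ t ∉ S, φ t ∈ K → |⟪P, φ t⟫| ≤ B := by
    intro t ht htK
    have hPt : ⟪P, φ t⟫ = ⟪b, φ t⟫ := K.inner_orthogonalProjectionOnto_eq_of_mem_right ⟨φ t, htK⟩ b
    have hcoh_t : ∀ k ∈ S, |⟪φ k, φ t⟫| ≤ 1 / f := fun k hk =>
      hcoh k t (ne_of_mem_of_not_mem hk ht)
    rw [hPt, hb, hb₀]
    exact (abs_inner_sum_smul_add_le S x φ v (φ t) (hnorm t) hcoh_t).trans (by linarith)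
  have hPnorm : ‖P‖ ≤ 2 * B / (1 - 1 / f) :=
    norm_le_of_mem_span_pair_of_abs_inner_le (hnorm i) (hnorm j) (hcoh i j hij)
      ((div_lt_one (by linarith)).mpr hf) (K.orthogonalProjectionOnto b).2
      (hP i hi (Submodule.subset_span (by simp))) (hP j hj (Submodule.subset_span (by simp)))
  refine hPnorm.trans (le_of_eq ?_)
  have hf₁ : f - 1 ≠ 0 := by linarith
  have hf₂ : f ^ 2 - 1 ≠ 0 := by nlinarith
  rw [hB]
  field_simp
  ring

theorem stmt_15 {m n : ℕ} (φ : Fin n → EuclideanSpace ℝ (Fin m))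
    (hnorm : ∀ i, ‖φ i‖ = 1) (f : ℝ) (hf : 1 < f)
    (hcoh : ∀ i j, i ≠ j → |⟪φ i, φ j⟫| ≤ 1 / f)
    (S : Finset (Fin n)) (x : Fin n → ℝ) (hsupp : ∀ k, k ∉ S → x k = 0)
    (b₀ : EuclideanSpace ℝ (Fin m)) (hb₀ : b₀ = ∑ k ∈ S, x k • φ k)
    (v : EuclideanSpace ℝ (Fin m)) (ε : ℝ) (hv : ‖v‖ ≤ ε)
    (b : EuclideanSpace ℝ (Fin m)) (hb : b = b₀ + v)
    (i j : Fin n) (hi : i ∉ S) (hj : j ∉ S) (hij : i ≠ j) :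
    ‖(Submodule.orthogonalProjectionOnto
        (Submodule.span ℝ ({φ i, φ j} : Set (EuclideanSpace ℝ (Fin m)))) b :
        EuclideanSpace ℝ (Fin m))‖
      ≤ (2 * f + 2) / (f ^ 2 - 1) * (∑ k ∈ S, |x k|)
        + (2 * f * (f + 1) / (f ^ 2 - 1)) * ε :=
  stmt_15_general φ hnorm f hf hcoh S x b₀ hb₀ v ε hv b hb i j hi hj hij
end

section
/- Let Φ ∈ ℝ^{m×n} with n > m have unit-norm columns. Then the mutual coherence satisfies the Welch bound μ(Φ) ≥ √((n−m)/(m(n−1))). -/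
open RealInnerProductSpace

private lemma swap4 {p q : ℕ} (f : Fin p → Fin p → Fin q → Fin q → ℝ) :
    ∑ i, ∑ j, ∑ a, ∑ b, f i j a b = ∑ a, ∑ b, ∑ i, ∑ j, f i j a b := by
  calc ∑ i, ∑ j, ∑ a, ∑ b, f i j a b
      = ∑ i, ∑ a, ∑ j, ∑ b, f i j a b :=
        Finset.sum_congr rfl fun i _ => Finset.sum_comm
    _ = ∑ a, ∑ i, ∑ j, ∑ b, f i j a b := Finset.sum_comm
    _ = ∑ a, ∑ i, ∑ b, ∑ j, f i j a b :=
        Finset.sum_congr rfl fun a _ => Finset.sum_congr rfl fun i _ => Finset.sum_comm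
    _ = ∑ a, ∑ b, ∑ i, ∑ j, f i j a b :=
        Finset.sum_congr rfl fun a _ => Finset.sum_comm

theorem stmt_19 {m n : ℕ} (hm : 1 ≤ m) (hmn : m < n)
    (φ : Fin n → EuclideanSpace ℝ (Fin m)) (hnorm : ∀ i, ‖φ i‖ = 1)
    (μ : ℝ) (hμ : IsGreatest {x : ℝ | ∃ i j : Fin n, i ≠ j ∧ x = |⟪φ i, φ j⟫|} μ) :
    Real.sqrt (((n : ℝ) - m) / (m * ((n : ℝ) - 1))) ≤ μ := by
  have hinner : ∀ i j, (⟪φ i, φ j⟫ : ℝ) = ∑ a, φ i a * φ j a := fun i j => by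
    simp [PiLp.inner_apply, RCLike.inner_apply, mul_comm]
  have hself : ∀ i, (⟪φ i, φ i⟫ : ℝ) = 1 := fun i => by
    rw [real_inner_self_eq_norm_sq, hnorm i]; norm_num
  -- Gram matrix of rows
  set H : Fin m → Fin m → ℝ := fun a b => ∑ i, φ i a * φ i b with hH
  set S : ℝ := ∑ i, ∑ j, (⟪φ i, φ j⟫ : ℝ) ^ 2 with hS
  -- S equals the sum of squares of H
  have hSeq : S = ∑ a, ∑ b, (H a b) ^ 2 := by
    have e1 : S = ∑ i, ∑ j, ∑ a, ∑ b, (φ i a * φ j a) * (φ i b * φ j b) := by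
      simp only [hS, hinner, sq]
      exact Finset.sum_congr rfl fun i _ => Finset.sum_congr rfl fun j _ =>
        Finset.sum_mul_sum _ _ _ _
    have e2 : ∑ a, ∑ b, (H a b) ^ 2 = ∑ a, ∑ b, ∑ i, ∑ j, (φ i a * φ i b) * (φ j a * φ j b) := by
      simp only [hH, sq]
      exact Finset.sum_congr rfl fun a _ => Finset.sum_congr rfl fun b _ =>
        Finset.sum_mul_sum _ _ _ _
    rw [e1, e2, swap4]
    refine Finset.sum_congr rfl fun a _ => Finset.sum_congr rfl fun b _ =>
      Finset.sum_congr rfl fun i _ => Finset.sum_congr rfl fun j _ => by ring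
  -- trace of H is n
  have htrace : ∑ a, H a a = (n : ℝ) := by
    simp only [hH]
    rw [Finset.sum_comm]
    have : ∀ i : Fin n, ∑ a, φ i a * φ i a = 1 := fun i => by
      rw [← hinner i i, hself i]
    simp [this]
  -- n^2 ≤ m * S
  have hCS : ((n : ℝ)) ^ 2 ≤ (m : ℝ) * S := by
    have h1 : (∑ a, H a a) ^ 2 ≤ (m : ℝ) * ∑ a, (H a a) ^ 2 := by
      have := sq_sum_le_card_mul_sum_sq (s := (Finset.univ : Finset (Fin m)))
        (f := fun a => H a a)
      simpa using this
    have h2 : ∑ a, (H a a) ^ 2 ≤ ∑ a, ∑ b, (H a b) ^ 2 := by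
      refine Finset.sum_le_sum fun a _ => ?_
      exact Finset.single_le_sum (f := fun b => (H a b) ^ 2)
        (fun b _ => sq_nonneg _) (Finset.mem_univ a)
    calc ((n : ℝ)) ^ 2 = (∑ a, H a a) ^ 2 := by rw [htrace]
      _ ≤ (m : ℝ) * ∑ a, (H a a) ^ 2 := h1
      _ ≤ (m : ℝ) * ∑ a, ∑ b, (H a b) ^ 2 := by
          exact mul_le_mul_of_nonneg_left h2 (by positivity)
      _ = (m : ℝ) * S := by rw [hSeq]
  -- bound S by off-diagonal terms
  have habs : ∀ i j : Fin n, i ≠ j → |⟪φ i, φ j⟫| ≤ μ := fun i j hij =>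
    hμ.2 ⟨i, j, hij, rfl⟩
  have hμ0 : 0 ≤ μ := by
    obtain ⟨i, j, hij, hx⟩ := hμ.1
    rw [hx]; exact abs_nonneg _
  have hSle : S ≤ (n : ℝ) + (n : ℝ) * ((n : ℝ) - 1) * μ ^ 2 := by
    have : ∀ i : Fin n, ∑ j, (⟪φ i, φ j⟫ : ℝ) ^ 2 ≤ 1 + ((n : ℝ) - 1) * μ ^ 2 := by
      intro i
      rw [← Finset.add_sum_erase _ _ (Finset.mem_univ i), hself i, one_pow]
      gcongr
      have h1n : 1 ≤ n := le_of_lt (lt_of_le_of_lt hm hmn)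
      have hcard : ((Finset.univ.erase i).card : ℝ) = (n : ℝ) - 1 := by
        rw [Finset.card_erase_of_mem (Finset.mem_univ i), Finset.card_univ,
          Fintype.card_fin, Nat.cast_sub h1n, Nat.cast_one]
      calc ∑ j ∈ Finset.univ.erase i, (⟪φ i, φ j⟫ : ℝ) ^ 2
          ≤ ∑ j ∈ Finset.univ.erase i, μ ^ 2 := by
            refine Finset.sum_le_sum fun j hj => ?_
            have hij : i ≠ j := fun h => (Finset.mem_erase.mp hj).1 h.symm
            have := habs i j hij
            calc (⟪φ i, φ j⟫ : ℝ) ^ 2 = |⟪φ i, φ j⟫| ^ 2 := (sq_abs _).symm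
              _ ≤ μ ^ 2 := pow_le_pow_left₀ (abs_nonneg _) this 2
        _ = ((n : ℝ) - 1) * μ ^ 2 := by
            rw [Finset.sum_const, nsmul_eq_mul, hcard]
    calc S ≤ ∑ _i : Fin n, (1 + ((n : ℝ) - 1) * μ ^ 2) :=
          Finset.sum_le_sum fun i _ => this i
      _ = (n : ℝ) + (n : ℝ) * ((n : ℝ) - 1) * μ ^ 2 := by
          rw [Finset.sum_const]; simp; ring
  -- combine
  have hn : (0 : ℝ) < n := by
    have : 0 < n := lt_of_le_of_lt (Nat.zero_le m) hmn
    exact_mod_cast this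
  have hmpos : (0 : ℝ) < m := by exact_mod_cast hm
  have hn2 : (2 : ℝ) ≤ n := by exact_mod_cast Nat.lt_of_le_of_lt hm hmn
  have hden : (0 : ℝ) < m * ((n : ℝ) - 1) := by
    apply mul_pos hmpos; linarith
  have hkey : ((n : ℝ)) ^ 2 ≤ (m : ℝ) * ((n : ℝ) + (n : ℝ) * ((n : ℝ) - 1) * μ ^ 2) :=
    le_trans hCS (mul_le_mul_of_nonneg_left hSle (by positivity))
  have h2 : ((n : ℝ) - m) / (m * ((n : ℝ) - 1)) ≤ μ ^ 2 := by
    rw [div_le_iff₀ hden]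
    nlinarith [hkey, hn, sq_nonneg μ]
  have := Real.sqrt_le_sqrt h2
  rwa [Real.sqrt_sq hμ0] at this
end
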